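/- arXiv:2402.09848 — 7 statements merged into one kernel-verified Lean document; each statement's English description precedes it below -/
import Mathlib

section
/- Let 𝒢 be a family of measurable functions from [0,1]^M to ℝ^M such that every measurable function g : [0,1]^M → ℝ^M is the pointwise limit of some sequence of members of 𝒢. Then for every Borel probability measure q on ℝ^M there exists a sequence (g_k), g_k ∈ 𝒢, such that the pushforward measures of the uniform probability measure on [0,1]^M under g_k converge weakly (in distribution) to q; i.e., 𝒢 together with the uniform input distribution yields a universal generative model. -/
/-!
Every Borel probability measure on a standard Borel space, `ℝ^M` in particular, is the law of a
measurable function of a single uniform variable on `[0,1]`, hence of one coordinate of a uniform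
point of the cube (for `M = 0` both measures are the Dirac mass at the only point). Approximating
that function pointwise on the cube by members of `𝒢`, dominated convergence turns pointwise
convergence of the maps into convergence of the integrals of every bounded continuous function
against the pushforwards.
-/

open MeasureTheory Filter Set Topology BoundedContinuousFunction

instance isProbabilityMeasure_volume_restrict_Icc_zero_one :
    IsProbabilityMeasure (volume.restrict (Icc (0:ℝ) 1)) := ⟨by simp⟩

lemma MeasureTheory.Measure.eq_of_subsingleton {α : Type*} [MeasurableSpace α] [Subsingleton α]
    (μ ν : Measure α) [IsProbabilityMeasure μ] [IsProbabilityMeasure ν] : μ = ν := by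
  ext s -
  induction s using Subsingleton.set_cases <;> simp

lemma volume_restrict_cube_eq_pi (ι : Type*) [Fintype ι] :
    volume.restrict (univ.pi fun _ : ι => Icc (0:ℝ) 1)
      = Measure.pi fun _ => volume.restrict (Icc (0:ℝ) 1) :=
  Measure.restrict_pi_pi _ _

instance isProbabilityMeasure_volume_restrict_cube {ι : Type*} [Fintype ι] :
    IsProbabilityMeasure (volume.restrict (univ.pi fun _ : ι => Icc (0:ℝ) 1)) := by
  rw [volume_restrict_cube_eq_pi]
  infer_instance

lemma measurePreserving_projIcc_unitInterval :
    MeasurePreserving (projIcc (0:ℝ) 1 zero_le_one) (volume.restrict (Icc 0 1))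
      (volume : Measure unitInterval) := by
  refine ⟨continuous_projIcc.measurable, ?_⟩
  rw [← unitInterval.measurePreserving_coe.map_eq,
    Measure.map_map continuous_projIcc.measurable measurable_subtype_coe]
  have : projIcc (0:ℝ) 1 zero_le_one ∘ Subtype.val = id := funext (projIcc_val zero_le_one)
  rw [this, Measure.map_id]

lemma exists_measurable_map_cube_eq {ι Y : Type*} [Fintype ι] [Nonempty ι] [MeasurableSpace Y]
    [StandardBorelSpace Y] (μ : Measure Y) [IsProbabilityMeasure μ] :
    ∃ f : (ι → ℝ) → Y, Measurable f ∧
      (volume.restrict (univ.pi fun _ : ι => Icc (0:ℝ) 1)).map f = μ := by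
  have := nonempty_of_isProbabilityMeasure μ
  obtain ⟨f, hf, hfμ⟩ := μ.exists_measurable_map_eq
  have hU := measurePreserving_projIcc_unitInterval.comp
    (measurePreserving_eval (fun _ : ι => volume.restrict (Icc (0:ℝ) 1)) (Classical.arbitrary ι))
  refine ⟨f ∘ projIcc 0 1 zero_le_one ∘ Function.eval (Classical.arbitrary ι),
    hf.comp hU.measurable, ?_⟩
  rw [volume_restrict_cube_eq_pi, ← Measure.map_map hf hU.measurable, hU.map_eq, hfμ]

lemma exists_measurable_self_map_cube_eq {ι : Type*} [Fintype ι] (q : Measure (ι → ℝ))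
    [IsProbabilityMeasure q] :
    ∃ g : (ι → ℝ) → (ι → ℝ), Measurable g ∧
      (volume.restrict (univ.pi fun _ : ι => Icc (0:ℝ) 1)).map g = q := by
  rcases isEmpty_or_nonempty ι with _ | _
  · refine ⟨id, measurable_id, ?_⟩
    rw [Measure.map_id]
    exact Measure.eq_of_subsingleton _ _
  · exact exists_measurable_map_cube_eq q

lemma tendsto_integral_map_of_ae_tendsto {Ω E : Type*} [MeasurableSpace Ω] {μ : Measure Ω}
    [IsFiniteMeasure μ] [TopologicalSpace E] [MeasurableSpace E] [OpensMeasurableSpace E]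
    {X : ℕ → Ω → E} {Z : Ω → E} (hX : ∀ k, AEMeasurable (X k) μ) (hZ : AEMeasurable Z μ)
    (hlim : ∀ᵐ ω ∂μ, Tendsto (fun k => X k ω) atTop (𝓝 (Z ω))) (F : E →ᵇ ℝ) :
    Tendsto (fun k => ∫ y, F y ∂μ.map (X k)) atTop (𝓝 (∫ y, F y ∂μ.map Z)) := by
  have hF := F.continuous.measurable
  simp_rw [integral_map (hX _) hF.aestronglyMeasurable, integral_map hZ hF.aestronglyMeasurable]
  refine tendsto_integral_of_dominated_convergence (fun _ => ‖F‖)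
    (fun k => (hF.comp_aemeasurable (hX k)).aestronglyMeasurable) (integrable_const _)
    (fun k => .of_forall fun ω => F.norm_coe_le_norm _) ?_
  filter_upwards [hlim] with ω hω using (F.continuous.tendsto _).comp hω

/-- If a family `𝒢` of measurable functions `[0,1]^M → ℝ^M` is pointwise dense
in the set of all measurable functions on the cube, then `𝒢` together with the uniform input
distribution on `[0,1]^M` yields a universal generative model: every Borel probability measure `q`
on `ℝ^M` is the weak (in distribution) limit of pushforwards of the uniform measure under members
of `𝒢`. -/
theorem stmt_2 (M : ℕ) (𝒢 : Set ((Fin M → ℝ) → (Fin M → ℝ)))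
    (hmeas : ∀ g ∈ 𝒢, Measurable g)
    (hdense : ∀ g : (Fin M → ℝ) → (Fin M → ℝ), Measurable g →
      ∃ s : ℕ → (Fin M → ℝ) → (Fin M → ℝ), (∀ k, s k ∈ 𝒢) ∧
        ∀ x ∈ Set.univ.pi fun _ : Fin M => Set.Icc (0 : ℝ) 1,
          Tendsto (fun k => s k x) atTop (nhds (g x))) :
    ∀ q : Measure (Fin M → ℝ), IsProbabilityMeasure q →
      ∃ s : ℕ → (Fin M → ℝ) → (Fin M → ℝ), (∀ k, s k ∈ 𝒢) ∧
        ∀ F : BoundedContinuousFunction (Fin M → ℝ) ℝ,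
          Tendsto
            (fun k => ∫ y, F y ∂(Measure.map (s k)
              (volume.restrict (Set.univ.pi fun _ : Fin M => Set.Icc (0 : ℝ) 1))))
            atTop (nhds (∫ y, F y ∂q)) := by
  intro q _
  obtain ⟨g, hg, rfl⟩ := exists_measurable_self_map_cube_eq q
  obtain ⟨s, hs𝒢, hs⟩ := hdense g hg
  have hcube : MeasurableSet (univ.pi fun _ : Fin M => Icc (0:ℝ) 1) :=
    .univ_pi fun _ => measurableSet_Icc
  exact ⟨s, hs𝒢, tendsto_integral_map_of_ae_tendsto (fun k => (hmeas _ (hs𝒢 k)).aemeasurable)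
    hg.aemeasurable (ae_restrict_of_forall_mem hcube hs)⟩
end

section
/- Fix M ≥ 1. For y ∈ [−1,1]^M define z_m = √((y_m + 1)/(2M)) for m = 1,…,M, and define ψ(y) = Σ_{m=1}^{M} z_m e_m + √(1 − Σ_{m=1}^{M} z_m²) · e_0 ∈ ℂ^{M+1}, where e_0, e_1, …, e_M is the standard basis of ℂ^{M+1}. Define the Hermitian matrices O_m = 2M·(e_m e_m†) − I for m = 1,…,M. Then: (i) ψ(y) is a well-defined unit vector for every y ∈ [−1,1]^M; (ii) ⟨ψ(y), O_m ψ(y)⟩ = y_m for all m and all y ∈ [−1,1]^M; and (iii) the operator (spectral) norm of O_m equals 2M − 1. -/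
open Matrix

/-- The coordinates `z_m = √((y_m + 1)/(2M))`. -/
noncomputable def zCoord (M : ℕ) (y : Fin M → ℝ) (m : Fin M) : ℝ :=
  Real.sqrt ((y m + 1) / (2 * M))

/-- The dense-encoding state `ψ(y) = Σ_m z_m e_m + √(1 - Σ_m z_m²) e_0 ∈ ℂ^{M+1}`,
where the index `0` plays the role of `e_0` and `m+1` the role of `e_m`, `m = 1, …, M`. -/
noncomputable def densePsi (M : ℕ) (y : Fin M → ℝ) : Fin (M + 1) → ℂ :=
  fun i => Fin.cases ((Real.sqrt (1 - ∑ m, zCoord M y m ^ 2) : ℝ) : ℂ)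
    (fun m => ((zCoord M y m : ℝ) : ℂ)) i

/-- The dense-encoding observables `O_m = 2M (e_m e_m†) - I` on `ℂ^{M+1}`. -/
noncomputable def denseObs (M : ℕ) (m : Fin M) : Matrix (Fin (M + 1)) (Fin (M + 1)) ℂ :=
  (2 * M : ℂ) • Matrix.single m.succ m.succ 1 - 1

lemma denseObs_mulVec (M : ℕ) (m : Fin M) (x : Fin (M+1) → ℂ) (i : Fin (M+1)) :
    ((denseObs M m) *ᵥ x) i = if i = m.succ then (2 * M - 1 : ℂ) * x i else -x i := by
  rw [denseObs, sub_mulVec, smul_mulVec, one_mulVec, single_mulVec]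
  simp only [Pi.sub_apply, Pi.smul_apply, one_mul, smul_eq_mul]
  rcases eq_or_ne i m.succ with rfl | h
  · simp [Function.update_self]; ring
  · simp [Function.update_of_ne h, h]

lemma toCLM_apply (M : ℕ) (m : Fin M) (x : EuclideanSpace ℂ (Fin (M+1))) (i : Fin (M+1)) :
    (Matrix.toEuclideanCLM (𝕜 := ℂ) (denseObs M m)) x i
      = if i = m.succ then (2 * M - 1 : ℂ) * x i else -x i := by
  have h := congrFun (Matrix.ofLp_toEuclideanCLM (denseObs M m) x) i
  simpa [Matrix.toLin'_apply, denseObs_mulVec] using h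

/-- For `M ≥ 1` and `y ∈ [-1,1]^M`: (i) `ψ(y)` is a well-defined unit vector;
(ii) `⟨ψ(y), O_m ψ(y)⟩ = y_m` for all `m`; (iii) each `O_m` is Hermitian with spectral norm
`2M - 1`. -/
theorem stmt_8 (M : ℕ) (hM : 1 ≤ M) :
    (∀ y : Fin M → ℝ, (∀ m, y m ∈ Set.Icc (-1 : ℝ) 1) →
      (∑ m, zCoord M y m ^ 2 ≤ 1) ∧
      star (densePsi M y) ⬝ᵥ densePsi M y = 1 ∧
      ∀ m : Fin M, star (densePsi M y) ⬝ᵥ (denseObs M m).mulVec (densePsi M y) = (y m : ℂ)) ∧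
    (∀ m : Fin M, (denseObs M m).IsHermitian) ∧
    ∀ m : Fin M, ‖Matrix.toEuclideanCLM (𝕜 := ℂ) (denseObs M m)‖ = 2 * M - 1 := by
  have hM0 : (0:ℝ) < M := by exact_mod_cast Nat.lt_of_lt_of_le Nat.zero_lt_one hM
  refine ⟨?_, ?_, ?_⟩
  · intro y hy
    have hz2 : ∀ m, zCoord M y m ^ 2 = (y m + 1) / (2 * M) := by
      intro m
      have h0 : (0:ℝ) ≤ (y m + 1) / (2 * M) := by
        have := (hy m).1
        apply div_nonneg (by linarith) (by positivity)
      rw [zCoord, Real.sq_sqrt h0]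
    have hS : ∑ m, zCoord M y m ^ 2 ≤ 1 := by
      calc ∑ m, zCoord M y m ^ 2 = ∑ m : Fin M, (y m + 1) / (2 * M) := by
            simp_rw [hz2]
        _ ≤ ∑ _m : Fin M, (2:ℝ) / (2 * (M:ℝ)) := by
            apply Finset.sum_le_sum
            intro m _
            gcongr
            have := (hy m).2
            linarith
        _ = 1 := by
            rw [Finset.sum_const, Finset.card_univ, Fintype.card_fin, nsmul_eq_mul]
            field_simp
    have h1S : 0 ≤ 1 - ∑ m, zCoord M y m ^ 2 := by linarith
    have hnorm : star (densePsi M y) ⬝ᵥ densePsi M y = 1 := by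
      rw [dotProduct, Fin.sum_univ_succ]
      simp only [densePsi, Fin.cases_zero, Fin.cases_succ, Pi.star_apply, RCLike.star_def,
        Complex.conj_ofReal, ← Complex.ofReal_mul, ← Complex.ofReal_sum, ← Complex.ofReal_add,
        ← Complex.ofReal_one]
      norm_cast
      rw [Real.mul_self_sqrt h1S]
      have : ∑ m, zCoord M y m * zCoord M y m = ∑ m, zCoord M y m ^ 2 := by
        simp_rw [sq]
      rw [this]; ring
    refine ⟨hS, hnorm, ?_⟩
    intro m
    have hmv : (denseObs M m) *ᵥ (densePsi M y)
        = (2 * M : ℂ) • (Pi.single m.succ (densePsi M y m.succ) : Fin (M+1) → ℂ) - densePsi M y := by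
      rw [denseObs, sub_mulVec, smul_mulVec, one_mulVec, single_mulVec, one_mul]
      rfl
    rw [hmv, dotProduct_sub, dotProduct_smul, dotProduct_single, hnorm]
    have hpsi : densePsi M y m.succ = ((zCoord M y m : ℝ) : ℂ) := rfl
    have hzz : (star (densePsi M y) m.succ) * densePsi M y m.succ
        = (((y m + 1) / (2 * M) : ℝ) : ℂ) := by
      simp only [Pi.star_apply, hpsi, RCLike.star_def, Complex.conj_ofReal,
        ← Complex.ofReal_mul]
      rw [← sq]
      exact_mod_cast congrArg Complex.ofReal (hz2 m)
    rw [hzz]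
    rw [smul_eq_mul]
    push_cast
    have hMne : (M:ℂ) ≠ 0 := Nat.cast_ne_zero.mpr (by omega)
    field_simp
    ring
  · intro m
    rw [Matrix.IsHermitian, denseObs, conjTranspose_sub, conjTranspose_smul, conjTranspose_one]
    congr 1
    ext i j
    simp [Matrix.single, Matrix.conjTranspose_apply, and_comm]
  · intro m
    set c : ℝ := 2 * M - 1 with hc
    have hc0 : (0:ℝ) ≤ c := by
      have : (1:ℝ) ≤ M := by exact_mod_cast hM
      simp only [hc]; linarith
    have hc1 : (1:ℝ) ≤ c := by
      have : (1:ℝ) ≤ M := by exact_mod_cast hM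
      simp only [hc]; linarith
    have hcast : (2 * (M:ℂ) - 1) = ((c : ℝ) : ℂ) := by push_cast [hc]; ring
    apply le_antisymm
    · apply ContinuousLinearMap.opNorm_le_bound _ hc0
      intro x
      rw [EuclideanSpace.norm_eq, EuclideanSpace.norm_eq]
      rw [← Real.sqrt_sq hc0, ← Real.sqrt_mul (by positivity)]
      apply Real.sqrt_le_sqrt
      rw [Finset.mul_sum]
      apply Finset.sum_le_sum
      intro i _
      rw [toCLM_apply]
      rcases eq_or_ne i m.succ with rfl | h
      · rw [if_pos rfl, hcast, norm_mul, Complex.norm_real, Real.norm_eq_abs,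
          abs_of_nonneg hc0, mul_pow]
      · rw [if_neg h, norm_neg]
        have h2 : (1:ℝ) ≤ c ^ 2 := by nlinarith
        calc ‖x i‖ ^ 2 = 1 * ‖x i‖ ^ 2 := (one_mul _).symm
          _ ≤ c ^ 2 * ‖x i‖ ^ 2 := mul_le_mul_of_nonneg_right h2 (sq_nonneg _)
    · have hx : (Matrix.toEuclideanCLM (𝕜 := ℂ) (denseObs M m)) (EuclideanSpace.single m.succ (1:ℂ))
          = ((c : ℝ) : ℂ) • EuclideanSpace.single m.succ (1:ℂ) := by
        ext i
        rw [toCLM_apply]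
        rcases eq_or_ne i m.succ with rfl | h
        · simp [EuclideanSpace.single_apply, hcast]
        · simp [EuclideanSpace.single_apply, h]
      have hle := (Matrix.toEuclideanCLM (𝕜 := ℂ) (denseObs M m)).le_opNorm
        (EuclideanSpace.single m.succ (1:ℂ))
      rw [hx, norm_smul, EuclideanSpace.norm_single] at hle
      simpa [Complex.norm_real, abs_of_nonneg hc0] using hle
end

section
/- For every M ≥ 1 and every Borel probability measure μ on ℝ^M with support contained in [−1,1]^M, there exist Hermitian matrices O_1, …, O_M on ℂ^{M+1}, each of operator (spectral) norm 2M − 1, and a measurable map ψ : (0,1) → { unit vectors of ℂ^{M+1} } such that the pushforward of the uniform probability measure on (0,1) under the map x ↦ ( ⟨ψ(x), O_m ψ(x)⟩ )_{m=1,…,M} equals μ. (This is the observable-level content of the dense-encoding universal sampler, which uses n = ⌈log₂(M+1)⌉ qubits, i.e. Hilbert space dimension M+1 ≤ 2^n, and observables of norm Θ(M).) -/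
/-!
Every probability measure on a standard Borel space is the image of the uniform measure on
`(0,1)` under a measurable map `T`, and since `μ` is carried by the cube `[-1,1]^M`, `T` can be
chosen with values in the cube. With `c = 2M - 1`, the observable `O_m = c (E_{0,m} + E_{m,0})`
has norm `c` and expectation `2c Re(conj ψ₀ ψ_m)` in `ψ`. Taking `ψ_m = T_m / (√2 c)` and
`ψ₀ = 1/√2 + i s` makes these expectations exactly `T_m`; because `c² ≥ M`, the coordinates
`ψ_m` carry total weight at most `1/2`, so a real slack `s` makes `ψ` a unit vector.
-/

open Matrix MeasureTheory Set

theorem exists_measurable_map_volume_Ioo_eq {Y : Type*} [MeasurableSpace Y]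
    [StandardBorelSpace Y] (μ : Measure Y) [IsProbabilityMeasure μ] :
    ∃ f : ℝ → Y, Measurable f ∧ (volume.restrict (Ioo (0 : ℝ) 1)).map f = μ := by
  have := nonempty_of_isProbabilityMeasure μ
  obtain ⟨f, hf, hfμ⟩ := μ.exists_measurable_map_eq
  have hproj : Measurable (projIcc (0 : ℝ) 1 zero_le_one) := continuous_projIcc.measurable
  refine ⟨f ∘ projIcc 0 1 zero_le_one, hf.comp hproj, ?_⟩
  have hI : (volume.restrict (Ioo (0 : ℝ) 1)).map (projIcc 0 1 zero_le_one) = volume := by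
    rw [Measure.restrict_congr_set Ioo_ae_eq_Icc, ← unitInterval.measurePreserving_coe.map_eq,
      Measure.map_map hproj measurable_subtype_coe]
    simp [Function.comp_def, projIcc_val]
  rw [← Measure.map_map hf hproj, hI, hfμ]

theorem exists_measurable_forall_mem_map_volume_Ioo_eq {Y : Type*} [MeasurableSpace Y]
    [StandardBorelSpace Y] (μ : Measure Y) [IsProbabilityMeasure μ] {s : Set Y}
    (hs : MeasurableSet s) (hμs : μ sᶜ = 0) :
    ∃ f : ℝ → Y, Measurable f ∧ (∀ x, f x ∈ s) ∧ (volume.restrict (Ioo (0 : ℝ) 1)).map f = μ := by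
  classical
  obtain ⟨f, hf, hfμ⟩ := exists_measurable_map_volume_Ioo_eq μ
  obtain ⟨y₀, hy₀⟩ : s.Nonempty := nonempty_of_measure_ne_zero (by
    rw [(prob_compl_eq_zero_iff hs).mp hμs]
    exact one_ne_zero)
  refine ⟨fun x => if f x ∈ s then f x else y₀, Measurable.ite (hf hs) hf measurable_const,
    fun x => by dsimp only; split_ifs with h <;> assumption, ?_⟩
  have hf_mem : ∀ᵐ x ∂volume.restrict (Ioo (0 : ℝ) 1), f x ∈ s :=
    ae_of_ae_map hf.aemeasurable (hfμ ▸ ae_iff.mpr hμs)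
  rw [← hfμ]
  exact Measure.map_congr (hf_mem.mono fun x hx => if_pos hx)

namespace Matrix

variable {n : Type*} [DecidableEq n]

noncomputable def symmSingle (i j : n) (c : ℝ) : Matrix n n ℂ :=
  single i j (c : ℂ) + single j i (c : ℂ)

theorem isHermitian_symmSingle (i j : n) (c : ℝ) : (symmSingle i j c).IsHermitian := by
  simp [symmSingle, IsHermitian, add_comm]

variable [Fintype n]

theorem symmSingle_mulVec (i j : n) (c : ℝ) (w : n → ℂ) :
    symmSingle i j c *ᵥ w = Pi.single i (c * w j) + Pi.single j (c * w i) := by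
  simp only [symmSingle, add_mulVec, single_mulVec]
  rfl

theorem re_star_dotProduct_symmSingle_mulVec (i j : n) (c : ℝ) (w : n → ℂ) :
    (star w ⬝ᵥ symmSingle i j c *ᵥ w).re = 2 * c * (star (w i) * w j).re := by
  rw [symmSingle_mulVec, dotProduct_add, dotProduct_single, dotProduct_single]
  simp only [Pi.star_apply, Complex.add_re, Complex.mul_re, Complex.mul_im, Complex.star_def,
    Complex.conj_re, Complex.conj_im, Complex.ofReal_re, Complex.ofReal_im]
  ring

theorem norm_toEuclideanCLM_symmSingle_apply_sq {i j : n} (hij : i ≠ j) (c : ℝ)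
    (v : EuclideanSpace ℂ n) :
    ‖toEuclideanCLM (𝕜 := ℂ) (symmSingle i j c) v‖ ^ 2 = c ^ 2 * (‖v j‖ ^ 2 + ‖v i‖ ^ 2) := by
  have hA : toEuclideanCLM (𝕜 := ℂ) (symmSingle i j c) v =
      EuclideanSpace.single i (c * v j) + EuclideanSpace.single j (c * v i) := by
    ext k
    simp [symmSingle_mulVec, Pi.single_apply]
  rw [hA, norm_add_sq (𝕜 := ℂ), EuclideanSpace.inner_single_left, PiLp.single_apply,
    if_neg hij, mul_zero, map_zero, mul_zero, add_zero, PiLp.norm_single, PiLp.norm_single,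
    norm_mul, norm_mul, Complex.norm_real, Real.norm_eq_abs, mul_pow, mul_pow, sq_abs]
  ring

theorem norm_toEuclideanCLM_symmSingle {i j : n} (hij : i ≠ j) (c : ℝ) :
    ‖toEuclideanCLM (𝕜 := ℂ) (symmSingle i j c)‖ = |c| := by
  refine le_antisymm (ContinuousLinearMap.opNorm_le_bound _ (abs_nonneg c) fun v => ?_) ?_
  · have hpair : ‖v j‖ ^ 2 + ‖v i‖ ^ 2 ≤ ‖v‖ ^ 2 := by
      have := Finset.sum_le_sum_of_subset_of_nonneg (Finset.subset_univ {j, i})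
        fun k _ _ => sq_nonneg ‖v k‖
      rwa [Finset.sum_pair hij.symm, ← EuclideanSpace.norm_sq_eq] at this
    refine le_of_sq_le_sq ?_ (by positivity)
    rw [norm_toEuclideanCLM_symmSingle_apply_sq hij, mul_pow, sq_abs]
    gcongr
  · have h := (toEuclideanCLM (𝕜 := ℂ) (symmSingle i j c)).le_opNorm (EuclideanSpace.single i 1)
    rw [PiLp.norm_single, norm_one, mul_one] at h
    refine le_of_sq_le_sq ?_ (norm_nonneg _)
    calc |c| ^ 2 = _ := by simp [norm_toEuclideanCLM_symmSingle_apply_sq hij, hij.symm]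
      _ ≤ _ := pow_le_pow_left₀ (norm_nonneg _) h 2

end Matrix

noncomputable def encodedState {M : ℕ} (a : ℝ) (t : Fin M → ℝ) : Fin (M + 1) → ℂ :=
  Fin.cons ⟨a, √(1 - a ^ 2 - ∑ j, t j ^ 2)⟩ fun j => (t j : ℂ)

theorem continuous_encodedState {M : ℕ} (a : ℝ) : Continuous (encodedState (M := M) a) := by
  refine continuous_pi fun i => ?_
  induction i using Fin.cases with
  | zero =>
    simp only [encodedState, Fin.cons_zero]
    exact Complex.equivRealProdCLM.symm.continuous.comp (continuous_const.prodMk (by fun_prop))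
  | succ j =>
    simp only [encodedState, Fin.cons_succ]
    fun_prop

theorem star_encodedState_dotProduct_self {M : ℕ} {a : ℝ} {t : Fin M → ℝ}
    (h : a ^ 2 + ∑ j, t j ^ 2 ≤ 1) : star (encodedState a t) ⬝ᵥ encodedState a t = 1 := by
  have hnormSq : ∀ z : ℂ, star z * z = Complex.normSq z := fun z => by
    rw [Complex.normSq_eq_conj_mul_self, Complex.star_def]
  simp only [dotProduct, Pi.star_apply, hnormSq, Fin.sum_univ_succ, encodedState, Fin.cons_zero,
    Fin.cons_succ, Complex.normSq_mk, Complex.normSq_ofReal, ← Complex.ofReal_sum, ← sq]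
  rw [Real.sq_sqrt (by linarith), Complex.ofReal_eq_one]
  ring

theorem re_star_encodedState_dotProduct_symmSingle_mulVec {M : ℕ} (a c : ℝ) (t : Fin M → ℝ)
    (j : Fin M) :
    (star (encodedState a t) ⬝ᵥ symmSingle 0 j.succ c *ᵥ encodedState a t).re =
      2 * c * a * t j := by
  rw [re_star_dotProduct_symmSingle_mulVec]
  simp [encodedState, mul_assoc]

theorem sum_sq_div_le_half {ι : Type*} [Fintype ι] {T : ι → ℝ} (hT : ∀ j, T j ∈ Icc (-1 : ℝ) 1)
    {c : ℝ} (hc : Fintype.card ι ≤ c ^ 2) : ∑ j, (T j / (√2 * c)) ^ 2 ≤ 1 / 2 := by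
  have hT_sq : ∑ j, T j ^ 2 ≤ Fintype.card ι := by
    calc ∑ j, T j ^ 2 ≤ ∑ _j : ι, (1 : ℝ) :=
          Finset.sum_le_sum fun j _ => (sq_le_one_iff_abs_le_one _).mpr (abs_le.mpr (hT j))
      _ = Fintype.card ι := by simp
  simp_rw [div_pow, ← Finset.sum_div, mul_pow, Real.sq_sqrt zero_le_two]
  refine div_le_of_le_mul₀ (by positivity) (by norm_num) ?_
  linarith

theorem natCast_le_sq_two_mul_natCast_sub_one (M : ℕ) : (M : ℝ) ≤ (2 * M - 1) ^ 2 := by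
  rcases M.eq_zero_or_pos with hM | hM
  · simp [hM]
  · have : (1 : ℝ) ≤ M := by exact_mod_cast hM
    nlinarith

theorem two_mul_natCast_sub_one_ne_zero (M : ℕ) : (2 * M - 1 : ℝ) ≠ 0 := fun h => by
  have : (2 * M : ℝ) = 1 := by linarith
  norm_cast at this
  omega

theorem stmt_9_general (M : ℕ) (μ : Measure (Fin M → ℝ)) [IsProbabilityMeasure μ]
    (hsupp : μ (Set.univ.pi fun _ : Fin M => Set.Icc (-1 : ℝ) 1)ᶜ = 0) :
    ∃ O : Fin M → Matrix (Fin (M + 1)) (Fin (M + 1)) ℂ,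
      (∀ m, (O m).IsHermitian ∧ ‖Matrix.toEuclideanCLM (𝕜 := ℂ) (O m)‖ = 2 * M - 1) ∧
      ∃ ψ : ℝ → Fin (M + 1) → ℂ, Measurable ψ ∧
        (∀ x ∈ Set.Ioo (0 : ℝ) 1, star (ψ x) ⬝ᵥ ψ x = 1) ∧
        Measure.map (fun x : ℝ => fun m : Fin M => (star (ψ x) ⬝ᵥ (O m).mulVec (ψ x)).re)
          (volume.restrict (Set.Ioo (0 : ℝ) 1)) = μ := by
  obtain ⟨T, hT, hT_mem, hT_map⟩ := exists_measurable_forall_mem_map_volume_Ioo_eq μ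
    (MeasurableSet.univ_pi fun _ => measurableSet_Icc) hsupp
  set c : ℝ := 2 * M - 1
  have hc : c ≠ 0 := two_mul_natCast_sub_one_ne_zero M
  refine ⟨fun m => symmSingle 0 m.succ c, fun m => ⟨isHermitian_symmSingle .., ?_⟩,
    fun x => encodedState (√2)⁻¹ fun j => T x j / (√2 * c), ?_,
    fun x _ => star_encodedState_dotProduct_self ?_, ?_⟩
  · have : (1 : ℝ) ≤ M := by exact_mod_cast m.pos
    rw [norm_toEuclideanCLM_symmSingle (Fin.succ_ne_zero m).symm, abs_of_pos (by linarith)]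
  · exact (continuous_encodedState _).measurable.comp (by fun_prop)
  · have := sum_sq_div_le_half (fun j => hT_mem x j trivial)
      (by simpa using natCast_le_sq_two_mul_natCast_sub_one M)
    rw [inv_pow, Real.sq_sqrt zero_le_two]
    linarith
  · convert hT_map using 2 with x
    ext m
    rw [re_star_encodedState_dotProduct_symmSingle_mulVec]
    field_simp
    rw [Real.sq_sqrt zero_le_two]

/-- dense-encoding universal sampler, observable-level content. For every
`M ≥ 1` and every Borel probability measure `μ` on `ℝ^M` supported in `[-1,1]^M`, there are
Hermitian observables `O_1, …, O_M` on `ℂ^{M+1}`, each of spectral norm `2M - 1`, and a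
measurable family of unit vectors `ψ : (0,1) → ℂ^{M+1}` such that the pushforward of the uniform
measure on `(0,1)` under `x ↦ (⟨ψ(x), O_m ψ(x)⟩)_m` equals `μ`. -/
theorem stmt_9 (M : ℕ) (hM : 1 ≤ M) (μ : Measure (Fin M → ℝ)) [IsProbabilityMeasure μ]
    (hsupp : μ (Set.univ.pi fun _ : Fin M => Set.Icc (-1 : ℝ) 1)ᶜ = 0) :
    ∃ O : Fin M → Matrix (Fin (M + 1)) (Fin (M + 1)) ℂ,
      (∀ m, (O m).IsHermitian ∧ ‖Matrix.toEuclideanCLM (𝕜 := ℂ) (O m)‖ = 2 * M - 1) ∧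
      ∃ ψ : ℝ → Fin (M + 1) → ℂ, Measurable ψ ∧
        (∀ x ∈ Set.Ioo (0 : ℝ) 1, star (ψ x) ⬝ᵥ ψ x = 1) ∧
        Measure.map (fun x : ℝ => fun m : Fin M => (star (ψ x) ⬝ᵥ (O m).mulVec (ψ x)).re)
          (volume.restrict (Set.Ioo (0 : ℝ) 1)) = μ :=
  stmt_9_general M μ hsupp
end

section
/- Let n, M ∈ ℕ and let O_1, …, O_M be Hermitian 2^n × 2^n matrices. Then the set { ( ⟨ψ, O_m ψ⟩ )_{m=1,…,M} : ψ ∈ ℂ^{2^n}, ‖ψ‖ = 1 } ⊆ ℝ^M is contained in an affine subspace of ℝ^M of dimension at most 4^n − 1. Consequently the outputs of any n-qubit expectation value sampling model with M observables lie in an affine subspace of dimension at most 4^n − 1. -/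
open Matrix Complex

noncomputable section Stmt11Aux

/-- self-adjoint elements are linearly equivalent to skew-adjoint ones via `I • ·`. -/
def stmt11_equiv (A : Type*) [AddCommGroup A] [Module ℂ A] [StarAddMonoid A] [StarModule ℂ A] :
    selfAdjoint A ≃ₗ[ℝ] skewAdjoint A where
  toFun x := ⟨I • (x : A), by
    simp only [skewAdjoint.mem_iff, star_smul, star_def, conj_I, x.2.star_eq, neg_smul]⟩
  map_add' x y := by ext; simp [smul_add]
  map_smul' r x := by
    ext
    simp only [selfAdjoint.val_smul, skewAdjoint.val_smul, RingHom.id_apply]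
    rw [smul_comm]
  invFun := skewAdjoint.negISMul
  left_inv x := by
    ext
    simp [skewAdjoint.negISMul_apply_coe, smul_smul, I_mul_I]
  right_inv x := Subtype.ext (skewAdjoint.I_smul_neg_I x)

variable {A : Type*} [AddCommGroup A] [Module ℂ A] [StarAddMonoid A] [StarModule ℂ A]

def stmt11_equiv2 : selfAdjoint A ≃ₗ[ℝ] (selfAdjoint.submodule ℝ A) := LinearEquiv.refl ℝ _

lemma stmt11_two_mul (h : FiniteDimensional ℝ A) :
    2 * Module.finrank ℝ (selfAdjoint.submodule ℝ A) = Module.finrank ℝ A := by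
  haveI : FiniteDimensional ℝ (selfAdjoint A) := (stmt11_equiv2 (A := A)).symm.finiteDimensional
  haveI : FiniteDimensional ℝ (skewAdjoint A) := (stmt11_equiv A).finiteDimensional
  rw [(StarModule.decomposeProdAdjoint ℝ A).finrank_eq, Module.finrank_prod,
    ← (stmt11_equiv A).finrank_eq, ← (stmt11_equiv2 (A := A)).finrank_eq, two_mul]

lemma stmt11_finrank_selfAdjoint (N : ℕ) :
    Module.finrank ℝ (selfAdjoint.submodule ℝ (Matrix (Fin N) (Fin N) ℂ)) = N * N := by
  have h := stmt11_two_mul (A := Matrix (Fin N) (Fin N) ℂ) inferInstance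
  rw [Module.finrank_matrix, Complex.finrank_real_complex, Fintype.card_fin] at h
  omega

end Stmt11Aux

/-- For any Hermitian observables `O_1, …, O_M` on `ℂ^{2^n}`, the set of
expectation-value vectors `(⟨ψ, O_m ψ⟩)_m` over unit vectors `ψ` is contained in an affine
subspace of `ℝ^M` of dimension at most `4^n - 1`; hence so are the outputs of any `n`-qubit
expectation value sampling model with these observables. -/
theorem stmt_11 (n M : ℕ) (O : Fin M → Matrix (Fin (2 ^ n)) (Fin (2 ^ n)) ℂ)
    (hO : ∀ m, (O m).IsHermitian) :
    ∃ s : AffineSubspace ℝ (Fin M → ℝ),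
      Module.finrank ℝ s.direction ≤ 4 ^ n - 1 ∧
      ∀ ψ : Fin (2 ^ n) → ℂ, star ψ ⬝ᵥ ψ = 1 →
        (fun m => (star ψ ⬝ᵥ (O m).mulVec ψ).re) ∈ s := by
  classical
  haveI : NeZero (2 ^ n) := ⟨pow_ne_zero n two_ne_zero⟩
  -- the real-linear "trace" functional and the real-linear expectation map
  set tr : Matrix (Fin (2 ^ n)) (Fin (2 ^ n)) ℂ →ₗ[ℝ] ℝ :=
    Complex.reLm.comp ((Matrix.traceLinearMap (Fin (2 ^ n)) ℂ ℂ).restrictScalars ℝ) with htr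
  set f : Matrix (Fin (2 ^ n)) (Fin (2 ^ n)) ℂ →ₗ[ℝ] (Fin M → ℝ) := LinearMap.pi fun m =>
    Complex.reLm.comp
      (((Matrix.traceLinearMap (Fin (2 ^ n)) ℂ ℂ).comp
        (LinearMap.mulLeft ℂ (O m))).restrictScalars ℝ) with hf
  set S : Submodule ℝ (Matrix (Fin (2 ^ n)) (Fin (2 ^ n)) ℂ) :=
    selfAdjoint.submodule ℝ _ with hS
  set W : Submodule ℝ (Matrix (Fin (2 ^ n)) (Fin (2 ^ n)) ℂ) :=
    S ⊓ LinearMap.ker tr with hW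
  -- generic facts about density matrices of unit vectors
  have hρherm : ∀ ψ : Fin (2 ^ n) → ℂ, star (vecMulVec ψ (star ψ)) = vecMulVec ψ (star ψ) := by
    intro ψ
    ext i j
    simp [Matrix.star_apply, vecMulVec_apply, mul_comm]
  have hρtr : ∀ ψ : Fin (2 ^ n) → ℂ, star ψ ⬝ᵥ ψ = 1 →
      Matrix.trace (vecMulVec ψ (star ψ)) = 1 := by
    intro ψ hψ
    rw [← hψ]
    simp [Matrix.trace, vecMulVec_apply, dotProduct, mul_comm]
  have hfρ : ∀ ψ : Fin (2 ^ n) → ℂ,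
      f (vecMulVec ψ (star ψ)) = fun m => (star ψ ⬝ᵥ (O m).mulVec ψ).re := by
    intro ψ
    funext m
    have key : Matrix.trace (O m * vecMulVec ψ (star ψ)) = star ψ ⬝ᵥ (O m).mulVec ψ := by
      simp only [Matrix.trace, Matrix.diag_apply, Matrix.mul_apply, dotProduct, Matrix.mulVec,
        vecMulVec_apply, Pi.star_apply, Finset.mul_sum]
      exact Finset.sum_congr rfl fun i _ => Finset.sum_congr rfl fun j _ => by ring
    simp only [hf, LinearMap.pi_apply, LinearMap.comp_apply, LinearMap.restrictScalars_apply,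
      Matrix.traceLinearMap_apply, LinearMap.mulLeft_apply, Complex.reLm_coe]
    rw [key]
  have htr_apply : ∀ ρ : Matrix (Fin (2 ^ n)) (Fin (2 ^ n)) ℂ,
      tr ρ = (Matrix.trace ρ).re := fun ρ => rfl
  -- a base point: the density matrix of a specific unit vector
  set ψ₀ : Fin (2 ^ n) → ℂ := Pi.single 0 1 with hψ₀def
  have hψ₀ : star ψ₀ ⬝ᵥ ψ₀ = 1 := by
    simp [hψ₀def, dotProduct, Pi.single_apply, apply_ite]
  set E : Matrix (Fin (2 ^ n)) (Fin (2 ^ n)) ℂ := vecMulVec ψ₀ (star ψ₀) with hE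
  refine ⟨AffineSubspace.mk' (f E) (W.map f), ?_, ?_⟩
  · rw [AffineSubspace.direction_mk']
    have h1 : Module.finrank ℝ (W.map f) ≤ Module.finrank ℝ W := Submodule.finrank_map_le f W
    have hWS : W < S := by
      refine lt_of_le_of_ne inf_le_left fun h => ?_
      have h1S : (1 : Matrix (Fin (2 ^ n)) (Fin (2 ^ n)) ℂ) ∈ S := by
        show (1 : Matrix (Fin (2 ^ n)) (Fin (2 ^ n)) ℂ) ∈ selfAdjoint _
        rw [selfAdjoint.mem_iff]
        exact star_one _
      rw [← h, hW, Submodule.mem_inf] at h1S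
      have h2 := LinearMap.mem_ker.mp h1S.2
      rw [htr_apply, Matrix.trace_one] at h2
      simp only [Fintype.card_fin] at h2
      rw [Complex.natCast_re] at h2
      have hpos : (0 : ℝ) < ((2 ^ n : ℕ) : ℝ) := by positivity
      exact absurd h2 hpos.ne'
    have h2 : Module.finrank ℝ W < Module.finrank ℝ S :=
      Submodule.finrank_lt_finrank_of_lt hWS
    have h3 : Module.finrank ℝ S = 2 ^ n * 2 ^ n := stmt11_finrank_selfAdjoint (2 ^ n)
    have h4 : 2 ^ n * 2 ^ n = 4 ^ n := by
      rw [← pow_add, show (4 : ℕ) = 2 ^ 2 by norm_num, ← pow_mul]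
      ring_nf
    omega
  · intro ψ hψ
    rw [AffineSubspace.mem_mk']
    refine ⟨vecMulVec ψ (star ψ) - E, Submodule.mem_inf.mpr ⟨?_, ?_⟩, ?_⟩
    · show vecMulVec ψ (star ψ) - E ∈ selfAdjoint _
      rw [selfAdjoint.mem_iff, star_sub, hρherm ψ, hE, hρherm ψ₀]
    · rw [LinearMap.mem_ker, map_sub, htr_apply, htr_apply, hρtr ψ hψ, hE, hρtr ψ₀ hψ₀]
      simp
    · rw [map_sub, hfρ ψ, vsub_eq_sub]
end

section
/- Let n, M ∈ ℕ with M ≥ 4^n. Then for any sequence of n-qubit expectation value sampling models — the k-th model given by a Borel probability measure ν_k on ℝ^{L_k}, a measurable map φ_k : ℝ^{L_k} → { unit vectors of ℂ^{2^n} }, and Hermitian 2^n × 2^n matrices O_{k,1}, …, O_{k,M} — the output distributions, i.e. the pushforwards of ν_k under x ↦ ( ⟨φ_k(x), O_{k,m} φ_k(x)⟩ )_{m=1,…,M}, do not converge weakly to the uniform probability measure on [−1,1]^M. Hence for an n-qubit expectation value sampling model family to approximate every distribution with support in [−1,1]^M to arbitrary accuracy, it is necessary that M ≤ 4^n − 1.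 -/
/-!
The `M` observables and the identity are `M + 1 > 4^n` vectors in the `4^n`-dimensional real space
of Hermitian `2^n × 2^n` matrices, so they satisfy a nontrivial real linear relation
`∑ aₘ Oₘ = b • 1`. Taking expectations in a unit vector, every output of the `k`-th model lies on
the affine hyperplane `a ⬝ᵥ y = b`. Normalizing `(a, b)` and passing to a convergent subsequence,
any weak limit of the output distributions is concentrated on a limiting hyperplane, which the
uniform measure on the cube is not, the cube having nonempty interior.
-/

open Matrix MeasureTheory Filter

/-- The uniform (normalized Lebesgue) probability measure on the cube `[-1,1]^M`. -/
noncomputable def uniformCube (M : ℕ) : Measure (Fin M → ℝ) :=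
  (volume (Set.univ.pi fun _ : Fin M => Set.Icc (-1 : ℝ) 1))⁻¹ •
    volume.restrict (Set.univ.pi fun _ : Fin M => Set.Icc (-1 : ℝ) 1)

open Topology ProbabilityTheory BoundedContinuousFunction

namespace Matrix

theorem IsHermitian.eq_zero_of_re_add_im_eq_zero {n : Type*} {A : Matrix n n ℂ}
    (hA : A.IsHermitian) (h : ∀ i j, (A i j).re + (A i j).im = 0) : A = 0 := by
  ext i j
  have hij := h i j
  have hji := h j i
  rw [← hA.apply j i] at hji
  simp only [Complex.star_def, Complex.conj_re, Complex.conj_im] at hji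
  refine Complex.ext ?_ ?_ <;> simp only [zero_apply, Complex.zero_re, Complex.zero_im] <;> linarith

/-- Injective on Hermitian matrices, whose entries `(i, j)` and `(j, i)` it sends to
`Re Aᵢⱼ ± Im Aᵢⱼ`; this bounds their real dimension by `card n ^ 2`. -/
def reAddImLinearMap {n : Type*} : Matrix n n ℂ →ₗ[ℝ] n × n → ℝ where
  toFun A ij := (A ij.1 ij.2).re + (A ij.1 ij.2).im
  map_add' A B := by ext; simp only [add_apply, Complex.add_re, Complex.add_im, Pi.add_apply]; ring
  map_smul' c A := by ext; simp [mul_add]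

theorem exists_ne_zero_sum_smul_eq_smul_one {n ι : Type*} [Fintype n] [DecidableEq n] [Fintype ι]
    {O : ι → Matrix n n ℂ} (hO : ∀ i, (O i).IsHermitian)
    (hcard : Fintype.card n ^ 2 ≤ Fintype.card ι) :
    ∃ p : (ι → ℝ) × ℝ, p ≠ 0 ∧ ∑ i, p.1 i • O i = p.2 • (1 : Matrix n n ℂ) := by
  let Λ : ((ι → ℝ) × ℝ) →ₗ[ℝ] Matrix n n ℂ :=
    Fintype.linearCombination ℝ O ∘ₗ LinearMap.fst ℝ _ ℝ -
      (LinearMap.snd ℝ (ι → ℝ) ℝ).smulRight 1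
  have hΛ (p : (ι → ℝ) × ℝ) : Λ p = ∑ i, p.1 i • O i - p.2 • 1 := by
    simp [Λ, Fintype.linearCombination_apply]
  have hker : LinearMap.ker (reAddImLinearMap ∘ₗ Λ) ≠ ⊥ :=
    LinearMap.ker_ne_bot_of_finrank_lt (by simpa [sq] using hcard)
  obtain ⟨p, hp, hp0⟩ := (Submodule.ne_bot_iff _).mp hker
  have hherm : (Λ p).IsHermitian := by
    rw [hΛ]
    refine .sub (isSelfAdjoint_sum _ fun i _ => (hO i).smul ?_) (isHermitian_one.smul ?_) <;> rfl
  refine ⟨p, hp0, sub_eq_zero.mp ((hΛ p).symm.trans (hherm.eq_zero_of_re_add_im_eq_zero ?_))⟩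
  exact fun i j => congrFun (LinearMap.mem_ker.mp hp) (i, j)

theorem dotProduct_re_expectation_eq {n ι : Type*} [Fintype n] [DecidableEq n] [Fintype ι]
    {O : ι → Matrix n n ℂ} {p : (ι → ℝ) × ℝ} (hp : ∑ i, p.1 i • O i = p.2 • (1 : Matrix n n ℂ))
    {ψ : n → ℂ} (hψ : star ψ ⬝ᵥ ψ = 1) :
    p.1 ⬝ᵥ (fun i => (star ψ ⬝ᵥ O i *ᵥ ψ).re) = p.2 := by
  have := congrArg (fun A => (star ψ ⬝ᵥ A *ᵥ ψ).re) hp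
  simp only [sum_mulVec, dotProduct_sum, smul_mulVec, dotProduct_smul, one_mulVec, hψ,
    Complex.re_sum, Complex.smul_re, smul_eq_mul] at this
  simpa [dotProduct] using this

theorem continuous_re_expectation {n : Type*} [Fintype n] (O : Matrix n n ℂ) :
    Continuous fun ψ : n → ℂ => (star ψ ⬝ᵥ O *ᵥ ψ).re := by
  simp only [dotProduct, mulVec]
  fun_prop

end Matrix

namespace BoundedContinuousFunction

noncomputable def unitClamp : ℝ →ᵇ ℝ :=
  mkOfBound ⟨fun t => max 0 (min t 1), by fun_prop⟩ 1 fun _ _ =>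
    Real.dist_le_of_mem_Icc_01 ⟨le_max_left _ _, max_le zero_le_one (min_le_right _ _)⟩
      ⟨le_max_left _ _, max_le zero_le_one (min_le_right _ _)⟩

theorem unitClamp_apply (t : ℝ) : unitClamp t = max 0 (min t 1) := rfl

theorem unitClamp_nonneg (t : ℝ) : 0 ≤ unitClamp t := le_max_left _ _

theorem unitClamp_le_one (t : ℝ) : unitClamp t ≤ 1 := max_le zero_le_one (min_le_right _ _)

theorem unitClamp_le {t : ℝ} (ht : 0 ≤ t) : unitClamp t ≤ t := max_le ht (min_le_left _ _)

theorem unitClamp_of_one_le {t : ℝ} (ht : 1 ≤ t) : unitClamp t = 1 := by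
  simp [unitClamp_apply, ht]

theorem unitClamp_eq_zero_iff {t : ℝ} : unitClamp t = 0 ↔ t ≤ 0 := by
  rw [unitClamp_apply, max_eq_left_iff, min_le_iff]
  simp

end BoundedContinuousFunction

theorem tendsto_integral_unitClamp_norm_sub {E : Type*} [NormedAddCommGroup E] [MeasurableSpace E]
    [OpensMeasurableSpace E] (μ : Measure E) [IsFiniteMeasure μ] :
    Tendsto (fun R : ℝ => ∫ y, unitClamp (‖y‖ - R) ∂μ) atTop (𝓝 0) := by
  have h := tendsto_integral_filter_of_dominated_convergence (μ := μ) (l := atTop)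
    (F := fun (R : ℝ) (y : E) => unitClamp (‖y‖ - R)) (f := 0) (fun _ => 1)
    (Eventually.of_forall fun R => by fun_prop)
    (Eventually.of_forall fun R => ae_of_all _ fun y => by
      rw [Real.norm_of_nonneg (unitClamp_nonneg _)]; exact unitClamp_le_one _)
    (integrable_const 1)
    (ae_of_all _ fun y => tendsto_const_nhds.congr' <|
      (eventually_ge_atTop ‖y‖).mono fun R hR => (unitClamp_eq_zero_iff.mpr (by linarith)).symm)
  simpa using h

section Hyperplane

variable {ι : Type*} [Fintype ι]

theorem abs_dotProduct_le (v y : ι → ℝ) : |v ⬝ᵥ y| ≤ Fintype.card ι * (‖v‖ * ‖y‖) := by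
  calc |v ⬝ᵥ y| ≤ ∑ i, |v i * y i| := Finset.abs_sum_le_sum_abs _ _
    _ ≤ ∑ _i : ι, ‖v‖ * ‖y‖ := Finset.sum_le_sum fun i _ => by
        rw [abs_mul]
        exact mul_le_mul (norm_le_pi_norm v i) (norm_le_pi_norm y i) (abs_nonneg _) (norm_nonneg _)
    _ = _ := by simp

theorem abs_dotProduct_sub_le {p q : (ι → ℝ) × ℝ} {y : ι → ℝ} (hy : p.1 ⬝ᵥ y = p.2) :
    |q.1 ⬝ᵥ y - q.2| ≤ (Fintype.card ι * ‖y‖ + 1) * ‖p - q‖ := by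
  have hsplit : q.1 ⬝ᵥ y - q.2 = (p.2 - q.2) - (p - q).1 ⬝ᵥ y := by
    rw [Prod.fst_sub, sub_dotProduct, hy]; ring
  calc |q.1 ⬝ᵥ y - q.2| ≤ |p.2 - q.2| + |(p - q).1 ⬝ᵥ y| := hsplit ▸ abs_sub _ _
    _ ≤ ‖p - q‖ + Fintype.card ι * (‖p - q‖ * ‖y‖) := by
        gcongr
        · exact norm_snd_le (p - q)
        · exact (abs_dotProduct_le _ _).trans (by gcongr; exact norm_fst_le (p - q))
    _ = _ := by ring

theorem unitClamp_sq_dotProduct_sub_le {p q : (ι → ℝ) × ℝ} {y : ι → ℝ} (hy : p.1 ⬝ᵥ y = p.2)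
    (R : ℝ) :
    unitClamp ((q.1 ⬝ᵥ y - q.2) ^ 2) ≤
      ((Fintype.card ι * (R + 1) + 1) * ‖p - q‖) ^ 2 + unitClamp (‖y‖ - R) := by
  rcases le_or_gt ‖y‖ (R + 1) with hyR | hyR
  · have hest := abs_le.mp (abs_dotProduct_sub_le (q := q) hy)
    calc unitClamp ((q.1 ⬝ᵥ y - q.2) ^ 2) ≤ (q.1 ⬝ᵥ y - q.2) ^ 2 := unitClamp_le (sq_nonneg _)
      _ ≤ ((Fintype.card ι * ‖y‖ + 1) * ‖p - q‖) ^ 2 := sq_le_sq' hest.1 hest.2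
      _ ≤ ((Fintype.card ι * (R + 1) + 1) * ‖p - q‖) ^ 2 := by gcongr
      _ ≤ _ := le_add_of_nonneg_right (unitClamp_nonneg _)
  · rw [unitClamp_of_one_le (t := ‖y‖ - R) (by linarith)]
    exact (unitClamp_le_one _).trans (le_add_of_nonneg_left (sq_nonneg _))

variable {μ : ℕ → Measure (ι → ℝ)} [∀ k, IsProbabilityMeasure (μ k)]
  {μ' : Measure (ι → ℝ)} [IsFiniteMeasure μ']

theorem ae_dotProduct_eq_of_tendsto {p : ℕ → (ι → ℝ) × ℝ} {q : (ι → ℝ) × ℝ}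
    (hpq : Tendsto p atTop (𝓝 q)) (hμp : ∀ k, ∀ᵐ y ∂μ k, (p k).1 ⬝ᵥ y = (p k).2)
    (hμ : ∀ F : (ι → ℝ) →ᵇ ℝ, Tendsto (fun k => ∫ y, F y ∂μ k) atTop (𝓝 (∫ y, F y ∂μ'))) :
    ∀ᵐ y ∂μ', q.1 ⬝ᵥ y = q.2 := by
  -- `G` vanishes exactly on the limiting hyperplane. On the `k`-th hyperplane it is small inside
  -- the ball of radius `R + 1` once `p k` is close to `q`, and `tail R` dominates it outside.
  let G : (ι → ℝ) →ᵇ ℝ := unitClamp.compContinuous ⟨fun y => (q.1 ⬝ᵥ y - q.2) ^ 2, by fun_prop⟩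
  let tail (R : ℝ) : (ι → ℝ) →ᵇ ℝ := unitClamp.compContinuous ⟨fun y => ‖y‖ - R, by fun_prop⟩
  have hG_le_tail (R : ℝ) : ∫ y, G y ∂μ' ≤ ∫ y, tail R y ∂μ' := by
    set C : ℝ := Fintype.card ι * (R + 1) + 1
    have hk (k : ℕ) : ∫ y, G y ∂μ k ≤ (C * ‖p k - q‖) ^ 2 + ∫ y, tail R y ∂μ k := by
      have hle : ∀ᵐ y ∂μ k, G y ≤ (C * ‖p k - q‖) ^ 2 + tail R y := by
        filter_upwards [hμp k] with y hy using unitClamp_sq_dotProduct_sub_le hy R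
      calc ∫ y, G y ∂μ k ≤ ∫ y, (C * ‖p k - q‖) ^ 2 + tail R y ∂μ k :=
            integral_mono_ae (G.integrable _) ((integrable_const _).add ((tail R).integrable _)) hle
        _ = _ := by rw [integral_add (integrable_const _) ((tail R).integrable _)]; simp
    have hlim : Tendsto (fun k => (C * ‖p k - q‖) ^ 2 + ∫ y, tail R y ∂μ k) atTop
        (𝓝 (∫ y, tail R y ∂μ')) := by
      simpa using
        (((tendsto_iff_norm_sub_tendsto_zero.mp hpq).const_mul C).pow 2).add (hμ (tail R))
    exact le_of_tendsto_of_tendsto' (hμ G) hlim hk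
  have hG : ∫ y, G y ∂μ' = 0 :=
    le_antisymm (ge_of_tendsto' (tendsto_integral_unitClamp_norm_sub μ') hG_le_tail)
      (integral_nonneg fun y => unitClamp_nonneg _)
  filter_upwards [(integral_eq_zero_iff_of_nonneg (f := G) (fun y => unitClamp_nonneg _)
    (G.integrable _)).mp hG] with y hy
  exact sub_eq_zero.mp ((sq_nonpos_iff _).mp (unitClamp_eq_zero_iff.mp hy))

theorem exists_ae_dotProduct_eq_of_tendsto {p : ℕ → (ι → ℝ) × ℝ} (hp : ∀ k, p k ≠ 0)
    (hμp : ∀ k, ∀ᵐ y ∂μ k, (p k).1 ⬝ᵥ y = (p k).2)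
    (hμ : ∀ F : (ι → ℝ) →ᵇ ℝ, Tendsto (fun k => ∫ y, F y ∂μ k) atTop (𝓝 (∫ y, F y ∂μ'))) :
    ∃ q : (ι → ℝ) × ℝ, q ≠ 0 ∧ ∀ᵐ y ∂μ', q.1 ⬝ᵥ y = q.2 := by
  have hsphere (k : ℕ) : ‖p k‖⁻¹ • p k ∈ Metric.sphere 0 1 := by
    simp [norm_smul, hp k]
  obtain ⟨q, hq, σ, hσ, hpq⟩ := (isCompact_sphere 0 1).tendsto_subseq hsphere
  refine ⟨q, ne_zero_of_mem_unit_sphere ⟨q, hq⟩, ae_dotProduct_eq_of_tendsto hpq (fun j => ?_)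
    fun F => (hμ F).comp hσ.tendsto_atTop⟩
  filter_upwards [hμp (σ j)] with y hy
  simp [smul_dotProduct, hy]

theorem exists_mem_ball_dotProduct_ne [DecidableEq ι] {q : (ι → ℝ) × ℝ} (hq : q ≠ 0)
    (x : ι → ℝ) {ε : ℝ} (hε : 0 < ε) : ∃ y ∈ Metric.ball x ε, q.1 ⬝ᵥ y ≠ q.2 := by
  by_cases hx : q.1 ⬝ᵥ x = q.2
  · obtain ⟨i, hi⟩ : ∃ i, q.1 i ≠ 0 := by
      by_contra! h
      exact hq (Prod.ext (funext h) (by simp [← hx, show q.1 = 0 from funext h]))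
    refine ⟨x + Pi.single i (ε / 2), ?_, ?_⟩
    · simp [Pi.norm_single, abs_of_pos hε, hε]
    · simp [dotProduct_add, hx, hi, hε.ne']
  · exact ⟨x, Metric.mem_ball_self hε, hx⟩

theorem not_ae_cond_dotProduct_eq {ν : Measure (ι → ℝ)} [ν.IsOpenPosMeasure] {s : Set (ι → ℝ)}
    (hs : MeasurableSet s) (hνs : ν s ≠ ⊤) (hs' : (interior s).Nonempty)
    {q : (ι → ℝ) × ℝ} (hq : q ≠ 0) : ¬ ∀ᵐ y ∂ν[|s], q.1 ⬝ᵥ y = q.2 := by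
  classical
  rw [ae_iff, cond_apply hs, mul_eq_zero, ENNReal.inv_eq_zero]
  obtain ⟨x, hx⟩ := hs'
  obtain ⟨ε, hε, hball⟩ := Metric.isOpen_iff.mp isOpen_interior x hx
  obtain ⟨y, hy, hne⟩ := exists_mem_ball_dotProduct_ne hq x hε
  have hV : ν (Metric.ball x ε ∩ {y | q.1 ⬝ᵥ y ≠ q.2}) ≠ 0 :=
    (Metric.isOpen_ball.inter (isOpen_ne_fun (by fun_prop) continuous_const)).measure_ne_zero ν
      ⟨y, hy, hne⟩
  rintro (htop | hnull)
  · exact hνs htop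
  · exact hV (measure_mono_null (Set.inter_subset_inter_left _ (hball.trans interior_subset)) hnull)

end Hyperplane

section Cube

variable (M : ℕ)

theorem uniformCube_eq_cond :
    uniformCube M = volume[|Set.univ.pi fun _ : Fin M => Set.Icc (-1 : ℝ) 1] := rfl

theorem measurableSet_cube : MeasurableSet (Set.univ.pi fun _ : Fin M => Set.Icc (-1 : ℝ) 1) :=
  .univ_pi fun _ => measurableSet_Icc

theorem volume_cube_ne_top : volume (Set.univ.pi fun _ : Fin M => Set.Icc (-1 : ℝ) 1) ≠ ⊤ :=
  (isCompact_univ_pi fun _ => isCompact_Icc).measure_lt_top.ne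

theorem interior_cube_nonempty :
    (interior (Set.univ.pi fun _ : Fin M => Set.Icc (-1 : ℝ) 1)).Nonempty :=
  ⟨0, by rw [interior_pi_set Set.finite_univ]; simp⟩

instance : IsProbabilityMeasure (uniformCube M) := by
  rw [uniformCube_eq_cond]
  exact cond_isProbabilityMeasure_of_finite (Measure.measure_pos_of_nonempty_interior _
    (interior_cube_nonempty M)).ne' (volume_cube_ne_top M)

theorem not_ae_uniformCube_dotProduct_eq {q : (Fin M → ℝ) × ℝ} (hq : q ≠ 0) :
    ¬ ∀ᵐ y ∂uniformCube M, q.1 ⬝ᵥ y = q.2 := by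
  rw [uniformCube_eq_cond]
  exact not_ae_cond_dotProduct_eq (measurableSet_cube M) (volume_cube_ne_top M)
    (interior_cube_nonempty M) hq

end Cube

/-- If `M ≥ 4^n`, then for any sequence of `n`-qubit expectation value sampling
models (input distributions `ν k`, measurable state preparations `φ k` into unit vectors of
`ℂ^{2^n}`, and Hermitian observables `O k m`), the output distributions do not converge weakly to
the uniform distribution on `[-1,1]^M`. Hence universality requires `M ≤ 4^n - 1`. -/
theorem stmt_13 (n M : ℕ) (hM : 4 ^ n ≤ M)
    (L : ℕ → ℕ) (ν : ∀ k, Measure (Fin (L k) → ℝ)) (hν : ∀ k, IsProbabilityMeasure (ν k))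
    (φ : ∀ k, (Fin (L k) → ℝ) → (Fin (2 ^ n) → ℂ)) (hφm : ∀ k, Measurable (φ k))
    (hφu : ∀ k x, star (φ k x) ⬝ᵥ φ k x = 1)
    (O : ℕ → Fin M → Matrix (Fin (2 ^ n)) (Fin (2 ^ n)) ℂ)
    (hO : ∀ k m, (O k m).IsHermitian) :
    ¬ ∀ F : BoundedContinuousFunction (Fin M → ℝ) ℝ,
        Tendsto
          (fun k => ∫ y, F y ∂(Measure.map
            (fun x => fun m : Fin M => (star (φ k x) ⬝ᵥ (O k m).mulVec (φ k x)).re) (ν k)))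
          atTop (nhds (∫ y, F y ∂(uniformCube M))) := by
  intro hlim
  have := hν
  let y (k : ℕ) (x : Fin (L k) → ℝ) (m : Fin M) : ℝ := (star (φ k x) ⬝ᵥ (O k m).mulVec (φ k x)).re
  have hcard : Fintype.card (Fin (2 ^ n)) ^ 2 ≤ Fintype.card (Fin M) := by
    rw [Fintype.card_fin, Fintype.card_fin, ← pow_mul, mul_comm, pow_mul]
    exact hM
  choose p hp0 hpO using fun k => exists_ne_zero_sum_smul_eq_smul_one (hO k) hcard
  have hmeas (k : ℕ) : Measurable (y k) :=
    measurable_pi_lambda _ fun m => (continuous_re_expectation (O k m)).measurable.comp (hφm k)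
  have (k : ℕ) : IsProbabilityMeasure ((ν k).map (y k)) :=
    Measure.isProbabilityMeasure_map (hmeas k).aemeasurable
  have hae (k : ℕ) : ∀ᵐ z ∂(ν k).map (y k), (p k).1 ⬝ᵥ z = (p k).2 :=
    (ae_map_iff (hmeas k).aemeasurable
      (isClosed_eq (by fun_prop) continuous_const).measurableSet).mpr
      (ae_of_all _ fun x => dotProduct_re_expectation_eq (hpO k) (hφu k x))
  obtain ⟨q, hq0, hq⟩ := exists_ae_dotProduct_eq_of_tendsto hp0 hae hlim
  exact not_ae_uniformCube_dotProduct_eq M hq0 hq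
end

section
/- Let (Ω, ℱ, P) be a probability space, D, M ∈ ℕ, Z : Ω → ℝ^D a bounded measurable random vector, A a real M × D matrix, and Y = A ∘ Z : Ω → ℝ^M. Then: (i) if J distinct components Y_{m_1}, …, Y_{m_J} of Y are pairwise uncorrelated and each has strictly positive variance, then J is at most the rank of the covariance matrix of Z; and (ii) if some component of Z is almost surely constant, then the rank of the covariance matrix of Z is at most D − 1. In particular, any n-qubit expectation value sampling model built on a fixed encoding circuit and input distribution yields at most 4^n − 1 pairwise uncorrelated nonconstant output variables, since its output is a linear image of the 4^n-dimensional primary mapping whose identity-Pauli component is constantly 1. -/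
open MeasureTheory Matrix

/-- The covariance matrix of a random vector `Z : Ω → ℝ^D` with respect to a measure `P`:
`Cov(Z_i, Z_j) = E[Z_i Z_j] - E[Z_i] E[Z_j]`. -/
noncomputable def covMatrix {Ω : Type*} [MeasurableSpace Ω] (P : Measure Ω) {D : ℕ}
    (Z : Ω → Fin D → ℝ) : Matrix (Fin D) (Fin D) ℝ :=
  Matrix.of fun i j =>
    (∫ ω, Z ω i * Z ω j ∂P) - (∫ ω, Z ω i ∂P) * (∫ ω, Z ω j ∂P)

/-- Let `Z : Ω → ℝ^D` be a bounded measurable random vector and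
`Y = A ∘ Z` for a real `M × D` matrix `A`. Then (i) the number of pairwise uncorrelated components
of `Y` with strictly positive variance is at most the rank of the covariance matrix of `Z`; and
(ii) if some component of `Z` is a.s. constant then that rank is at most `D - 1`. -/
theorem stmt_17 {Ω : Type*} [MeasurableSpace Ω] (P : Measure Ω) [IsProbabilityMeasure P]
    (D M : ℕ) (Z : Ω → Fin D → ℝ) (hZm : Measurable Z)
    (C : ℝ) (hZb : ∀ ω i, |Z ω i| ≤ C)
    (A : Matrix (Fin M) (Fin D) ℝ) (Y : Ω → Fin M → ℝ)
    (hY : ∀ ω, Y ω = A.mulVec (Z ω)) :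
    (∀ (J : ℕ) (ι : Fin J → Fin M), Function.Injective ι →
      (∀ j, 0 < covMatrix P Y (ι j) (ι j)) →
      (∀ j j', j ≠ j' → covMatrix P Y (ι j) (ι j') = 0) →
      J ≤ (covMatrix P Z).rank) ∧
    ((∃ i : Fin D, ∃ c : ℝ, ∀ᵐ ω ∂P, Z ω i = c) → (covMatrix P Z).rank ≤ D - 1) := by
  -- integrability
  have hZmi : ∀ i, Measurable fun ω => Z ω i := fun i => (measurable_pi_apply i).comp hZm
  have hZi : ∀ i, Integrable (fun ω => Z ω i) P := by
    intro i
    refine (integrable_const |C|).mono' (hZmi i).aestronglyMeasurable (ae_of_all _ fun ω => ?_)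
    simpa [Real.norm_eq_abs] using (hZb ω i).trans (le_abs_self C)
  have hZZ : ∀ i j, Integrable (fun ω => Z ω i * Z ω j) P := by
    intro i j
    refine (integrable_const (|C| * |C|)).mono'
      ((hZmi i).mul (hZmi j)).aestronglyMeasurable (ae_of_all _ fun ω => ?_)
    rw [Real.norm_eq_abs, abs_mul]
    exact mul_le_mul ((hZb ω i).trans (le_abs_self C)) ((hZb ω j).trans (le_abs_self C))
      (abs_nonneg _) (abs_nonneg _)
  -- the key identity
  have h1 : ∀ m, (∫ ω, Y ω m ∂P) = ∑ d, A m d * ∫ ω, Z ω d ∂P := by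
    intro m
    have : ∀ ω, Y ω m = ∑ d, A m d * Z ω d := by
      intro ω; simp [hY, Matrix.mulVec, dotProduct]
    simp_rw [this]
    rw [integral_finset_sum _ fun d _ => (hZi d).const_mul _]
    simp_rw [integral_const_mul]
  have h2 : ∀ m k, (∫ ω, Y ω m * Y ω k ∂P)
      = ∑ d, ∑ e, A m d * A k e * ∫ ω, Z ω d * Z ω e ∂P := by
    intro m k
    have : ∀ ω, Y ω m * Y ω k = ∑ d, ∑ e, A m d * A k e * (Z ω d * Z ω e) := by
      intro ω
      simp only [hY, Matrix.mulVec, dotProduct]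
      rw [Finset.sum_mul_sum]
      exact Finset.sum_congr rfl fun d _ => Finset.sum_congr rfl fun e _ => by ring
    simp_rw [this]
    rw [integral_finset_sum _ fun d _ =>
      integrable_finset_sum _ fun e _ => ((hZZ d e).const_mul _)]
    refine Finset.sum_congr rfl fun d _ => ?_
    rw [integral_finset_sum _ fun e _ => ((hZZ d e).const_mul _)]
    simp_rw [integral_const_mul]
  have key : covMatrix P Y = A * covMatrix P Z * Aᵀ := by
    ext m k
    simp only [covMatrix, Matrix.of_apply, Matrix.mul_apply, Matrix.transpose_apply, h1, h2]
    rw [Finset.sum_mul_sum, ← Finset.sum_sub_distrib]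
    rw [show ∑ e : Fin D, (∑ d : Fin D, A m d * (((∫ ω, Z ω d * Z ω e ∂P) -
        (∫ ω, Z ω d ∂P) * ∫ ω, Z ω e ∂P))) * A k e
      = ∑ d : Fin D, ∑ e : Fin D, (A m d * (((∫ ω, Z ω d * Z ω e ∂P) -
        (∫ ω, Z ω d ∂P) * ∫ ω, Z ω e ∂P))) * A k e by
        rw [Finset.sum_comm]; exact Finset.sum_congr rfl fun e _ => Finset.sum_mul ..]
    refine Finset.sum_congr rfl fun d _ => ?_
    rw [← Finset.sum_sub_distrib]
    exact Finset.sum_congr rfl fun e _ => by ring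
  constructor
  · intro J ι hinj hpos hzero
    set d : Fin J → ℝ := fun j => covMatrix P Y (ι j) (ι j) with hd
    set E : Matrix (Fin J) (Fin M) ℝ := Matrix.of fun j m => if ι j = m then 1 else 0 with hE
    have hsub : E * covMatrix P Y * Eᵀ = Matrix.diagonal d := by
      ext j j'
      have : (E * covMatrix P Y * Eᵀ) j j' = covMatrix P Y (ι j) (ι j') := by
        simp [hE, Matrix.mul_apply, Matrix.transpose_apply, ite_mul, mul_ite]
      rw [this, Matrix.diagonal_apply]
      by_cases h : j = j'
      · subst h; simp [hd]
      · simp [h, hzero j j' h]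
    have hJ : (Matrix.diagonal d).rank = J := by
      rw [Matrix.rank_diagonal]
      rw [Fintype.card_congr (Equiv.subtypeUnivEquiv fun j => (hpos j).ne')]
      exact Fintype.card_fin J
    calc J = (Matrix.diagonal d).rank := hJ.symm
      _ = (E * covMatrix P Y * Eᵀ).rank := by rw [hsub]
      _ ≤ (E * covMatrix P Y).rank := Matrix.rank_mul_le_left _ _
      _ ≤ (covMatrix P Y).rank := Matrix.rank_mul_le_right _ _
      _ = (A * covMatrix P Z * Aᵀ).rank := by rw [key]
      _ ≤ (A * covMatrix P Z).rank := Matrix.rank_mul_le_left _ _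
      _ ≤ (covMatrix P Z).rank := Matrix.rank_mul_le_right _ _
  · rintro ⟨i, c, hc⟩
    have hEi : (∫ ω, Z ω i ∂P) = c := by
      rw [integral_congr_ae hc]; simp
    have col0 : ∀ j, covMatrix P Z j i = 0 := by
      intro j
      have : (∫ ω, Z ω j * Z ω i ∂P) = (∫ ω, Z ω j ∂P) * c := by
        rw [← integral_mul_const]
        exact integral_congr_ae (hc.mono fun ω h => by dsimp only; rw [h])
      simp [covMatrix, this, hEi]
    have hker : (covMatrix P Z).mulVecLin (Pi.single i 1) = 0 := by
      ext j
      simp [Matrix.mulVecLin_apply, Matrix.mulVec_single, col0]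
    have hne : (Pi.single i (1:ℝ) : Fin D → ℝ) ≠ 0 := by
      intro h
      have := congrFun h i
      simp at this
    have hrk := LinearMap.finrank_range_add_finrank_ker ((covMatrix P Z).mulVecLin)
    rw [Module.finrank_fin_fun] at hrk
    have hker1 : 0 < Module.finrank ℝ (LinearMap.ker (covMatrix P Z).mulVecLin) := by
      rw [Module.finrank_pos_iff]
      exact ⟨⟨_, LinearMap.mem_ker.2 hker⟩, 0, by simpa [Submodule.mk_eq_zero] using hne⟩
    rw [Matrix.rank]
    omega
end

section
/- Let d, L, M ∈ ℕ, let W_0, W_1, …, W_L be d × d unitary matrices, let H_1, …, H_L be diagonal d × d matrices with integer diagonal entries, and let j_1, …, j_L ∈ {1,…,M}. Define U(x) = W_L · e^{i x_{j_L} H_L} · W_{L−1} ⋯ W_1 · e^{i x_{j_1} H_1} · W_0 for x ∈ ℝ^M. Then for every Hermitian d × d matrix O there exist K ∈ ℕ and coefficients c_k ∈ ℂ for k ∈ {−K,…,K}^M such that for all x ∈ ℝ^M, ⟨e_0, U(x)† O U(x) e_0⟩ = Σ_{k ∈ {−K,…,K}^M} c_k · e^{i (k₁x₁ + ⋯ +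 k_M x_M)}; i.e., the expectation value function is an exact finite multivariate Fourier series. Consequently, an expectation value sampling model using such an integer-spectrum reuploading circuit with input uniform on [0,2π)^M outputs a random variable with an exact finite polynomial chaos expansion in the orthonormal family { x ↦ e^{i⟨k,x⟩} : k ∈ ℤ^M }. -/
open Matrix

/-!
Functions `x ↦ ∑ c_k e^{i⟨k,x⟩}` with finitely many `k ∈ ℤ^M` form a star-subalgebra of `ℂ`-valued
functions: `e^{i⟨k,x⟩} e^{i⟨l,x⟩} = e^{i⟨k+l,x⟩}`, and conjugation sends `k` to `-k`. Because the
spectra of the `H_l` are integral, each entry of `e^{i x_j H_l}` is `0` or such a mode, so the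
entries of `U(x)`, and then of `U(x)† O U(x)`, are built from modes and constants by sums, products
and conjugation. Finitely many frequencies fit into a box `{-K, …, K}^M`.
-/

/-- The integer-spectrum data-reuploading circuit
`U(x) = W_L e^{i x_{j_L} H_L} W_{L-1} ⋯ W_1 e^{i x_{j_1} H_1} W_0`,
where the diagonal integer matrix `H_l` is given by its diagonal `H l : Fin d → ℤ`. -/
noncomputable def intSpecCircuit (d L M : ℕ) (W : ℕ → Matrix (Fin d) (Fin d) ℂ)
    (H : ℕ → Fin d → ℤ) (j : ℕ → Fin M) (x : Fin M → ℝ) : Matrix (Fin d) (Fin d) ℂ :=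
  W L * ((List.range L).reverse.map fun l =>
    Matrix.diagonal (fun t => Complex.exp (Complex.I * (x (j (l + 1)) : ℂ) * ((H (l + 1) t : ℤ) : ℂ)))
      * W l).prod

noncomputable section

variable (ι : Type*) [Fintype ι]

def fourierMode : Multiplicative (ι → ℤ) →* ((ι → ℝ) → ℂ) where
  toFun k x := Complex.exp (Complex.I * ∑ i, (k.toAdd i : ℂ) * (x i : ℂ))
  map_one' := by ext x; simp
  map_mul' k l := by
    ext x
    simp only [toAdd_mul, Pi.add_apply, Int.cast_add, add_mul, Finset.sum_add_distrib, mul_add,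
      Complex.exp_add, Pi.mul_apply]

def trigPoly : StarSubalgebra ℂ ((ι → ℝ) → ℂ) :=
  StarAlgebra.adjoin ℂ (Set.range (fourierMode ι))

variable {ι}

theorem star_fourierMode (k : Multiplicative (ι → ℤ)) :
    star (fourierMode ι k) = fourierMode ι k⁻¹ := by
  ext x
  simp only [Pi.star_apply, fourierMode, MonoidHom.coe_mk, OneHom.coe_mk, toAdd_inv, Pi.neg_apply,
    Int.cast_neg, neg_mul, Finset.sum_neg_distrib, mul_neg, Complex.star_def, ← Complex.exp_conj,
    map_mul, map_sum, Complex.conj_I, map_intCast, Complex.conj_ofReal]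

/-- The modes form a submonoid closed under `star`, so the star-algebra they generate is their
linear span. -/
theorem trigPoly_toSubmodule :
    Subalgebra.toSubmodule (trigPoly ι).toSubalgebra =
      Submodule.span ℂ (Set.range (fourierMode ι)) := by
  have hstar : star (Set.range (fourierMode ι)) ⊆ Set.range (fourierMode ι) := by
    rintro _ ⟨k, hk⟩
    exact ⟨k⁻¹, by rw [← star_fourierMode, hk, star_star]⟩
  rw [trigPoly, StarAlgebra.adjoin_toSubalgebra, Set.union_eq_left.mpr hstar,
    Algebra.adjoin_eq_span, ← MonoidHom.coe_mrange, Submonoid.closure_eq]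

theorem exists_sum_Icc_of_mem_trigPoly [DecidableEq ι] {f : (ι → ℝ) → ℂ} (hf : f ∈ trigPoly ι) :
    ∃ (K : ℕ) (c : (ι → ℤ) → ℂ), ∀ x : ι → ℝ,
      f x = ∑ k ∈ Finset.Icc (fun _ : ι => -(K : ℤ)) (fun _ : ι => (K : ℤ)),
        c k * Complex.exp (Complex.I * ∑ i, (k i : ℂ) * (x i : ℂ)) := by
  have hspan : f ∈ Submodule.span ℂ (Set.range (fourierMode ι)) := by
    rw [← trigPoly_toSubmodule]; exact hf
  obtain ⟨c, rfl⟩ := Finsupp.mem_span_range_iff_exists_finsupp.mp hspan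
  set K := c.support.sup fun k => Finset.univ.sup fun i : ι => (k.toAdd i).natAbs
  have hsupp : c.support ⊆ (Finset.Icc (fun _ : ι => -(K : ℤ)) fun _ => (K : ℤ)).map
      Multiplicative.ofAdd.toEmbedding := by
    intro k hk
    have hbound (i : ι) : (k.toAdd i).natAbs ≤ K :=
      (Finset.le_sup (f := fun i => (k.toAdd i).natAbs) (Finset.mem_univ i)).trans
        (Finset.le_sup (f := fun k => Finset.univ.sup fun i => (k.toAdd i).natAbs) hk)
    simp only [Finset.mem_map_equiv, Multiplicative.ofAdd_symm_eq, Finset.mem_Icc, Pi.le_def]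
    exact ⟨fun i => by have := hbound i; omega, fun i => by have := hbound i; omega⟩
  refine ⟨K, fun k => c (Multiplicative.ofAdd k), fun x => ?_⟩
  rw [Finsupp.sum_of_support_subset c hsupp (fun k a => a • fourierMode ι k)
    (fun _ _ => zero_smul ℂ _), Finset.sum_map]
  simp [fourierMode, Finset.sum_apply]

theorem exp_mul_intCast_mem_trigPoly (i : ι) (n : ℤ) :
    (fun x : ι → ℝ => Complex.exp (Complex.I * (x i : ℂ) * (n : ℂ))) ∈ trigPoly ι := by
  classical
  refine StarAlgebra.subset_adjoin ℂ _ ⟨Multiplicative.ofAdd (Pi.single i n), ?_⟩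
  ext x
  simp [fourierMode, Pi.single_apply]
  ring_nf

theorem const_mem_trigPoly (c : ℂ) : (fun _ : ι → ℝ => c) ∈ trigPoly ι :=
  (trigPoly ι).algebraMap_mem c

end

section MatrixEntries

variable {X R l m n S : Type*} [SetLike S (X → R)] {s : S}

theorem mul_apply_mem [Fintype m] [Semiring R] [SubsemiringClass S (X → R)]
    {F : X → Matrix l m R} {G : X → Matrix m n R}
    (hF : ∀ a b, (fun x => F x a b) ∈ s) (hG : ∀ a b, (fun x => G x a b) ∈ s) (a : l) (b : n) :
    (fun x => (F x * G x) a b) ∈ s := by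
  have hsum : (fun x => (F x * G x) a b) = ∑ t, (fun x => F x a t) * (fun x => G x t b) := by
    ext x
    simp [Matrix.mul_apply, Finset.sum_apply]
  rw [hsum]
  exact sum_mem fun t _ => mul_mem (hF a t) (hG t b)

theorem conjTranspose_apply_mem [Star R] [StarMemClass S (X → R)] {F : X → Matrix n m R}
    (hF : ∀ a b, (fun x => F x a b) ∈ s) (a : m) (b : n) :
    (fun x => (F x)ᴴ a b) ∈ s :=
  star_mem (hF b a)

theorem diagonal_apply_mem [DecidableEq n] [Zero R] [ZeroMemClass S (X → R)] {v : X → n → R}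
    (hv : ∀ a, (fun x => v x a) ∈ s) (a b : n) :
    (fun x => diagonal (v x) a b) ∈ s := by
  by_cases hab : a = b
  · subst hab
    simpa only [diagonal_apply_eq] using hv a
  · simp only [diagonal_apply_ne _ hab]
    exact zero_mem s

end MatrixEntries

theorem intSpecCircuit_zero (d M : ℕ) (W : ℕ → Matrix (Fin d) (Fin d) ℂ)
    (H : ℕ → Fin d → ℤ) (j : ℕ → Fin M) (x : Fin M → ℝ) :
    intSpecCircuit d 0 M W H j x = W 0 := by
  simp [intSpecCircuit]

theorem intSpecCircuit_succ (d L M : ℕ) (W : ℕ → Matrix (Fin d) (Fin d) ℂ)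
    (H : ℕ → Fin d → ℤ) (j : ℕ → Fin M) (x : Fin M → ℝ) :
    intSpecCircuit d (L + 1) M W H j x =
      W (L + 1) * (diagonal (fun t =>
          Complex.exp (Complex.I * (x (j (L + 1)) : ℂ) * (H (L + 1) t : ℂ))) *
        intSpecCircuit d L M W H j x) := by
  simp [intSpecCircuit, List.range_succ, Matrix.mul_assoc]

theorem intSpecCircuit_apply_mem_trigPoly (d L M : ℕ) (W : ℕ → Matrix (Fin d) (Fin d) ℂ)
    (H : ℕ → Fin d → ℤ) (j : ℕ → Fin M) (a b : Fin d) :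
    (fun x => intSpecCircuit d L M W H j x a b) ∈ trigPoly (Fin M) := by
  induction L generalizing a b with
  | zero =>
    simpa only [intSpecCircuit_zero] using const_mem_trigPoly (W 0 a b)
  | succ L ih =>
    simp only [intSpecCircuit_succ]
    refine mul_apply_mem (fun a b => const_mem_trigPoly (W (L + 1) a b))
      (mul_apply_mem (diagonal_apply_mem fun t => ?_) ih) a b
    exact exp_mul_intCast_mem_trigPoly (j (L + 1)) (H (L + 1) t)

theorem stmt_18_general (d L M : ℕ) (hd : 0 < d)
    (W : ℕ → Matrix (Fin d) (Fin d) ℂ)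
    (H : ℕ → Fin d → ℤ) (j : ℕ → Fin M)
    (O : Matrix (Fin d) (Fin d) ℂ) :
    ∃ (K : ℕ) (c : (Fin M → ℤ) → ℂ), ∀ x : Fin M → ℝ,
      ((intSpecCircuit d L M W H j x)ᴴ * O * intSpecCircuit d L M W H j x) ⟨0, hd⟩ ⟨0, hd⟩ =
        ∑ k ∈ Finset.Icc (fun _ : Fin M => -(K : ℤ)) (fun _ : Fin M => (K : ℤ)),
          c k * Complex.exp (Complex.I * ∑ i, (k i : ℂ) * (x i : ℂ)) := by
  have hU := intSpecCircuit_apply_mem_trigPoly d L M W H j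
  have hO (a b : Fin d) : (fun _ : Fin M → ℝ => O a b) ∈ trigPoly (Fin M) := const_mem_trigPoly _
  exact exists_sum_Icc_of_mem_trigPoly <|
    mul_apply_mem (mul_apply_mem (conjTranspose_apply_mem hU) hO) hU _ _

/-- For any unitaries `W_0, …, W_L`, integer diagonal matrices `H_1, …, H_L`
and indices `j_1, …, j_L ∈ {1, …, M}`, and any Hermitian observable `O`, the expectation value
`⟨e₀, U(x)† O U(x) e₀⟩` of the integer-spectrum reuploading circuit is an exact finite
multivariate Fourier series: there are `K` and coefficients `c_k`, `k ∈ {-K, …, K}^M`, with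
`⟨e₀, U(x)† O U(x) e₀⟩ = Σ_k c_k e^{i(k₁x₁ + ⋯ + k_M x_M)}` for all `x ∈ ℝ^M`. -/
theorem stmt_18 (d L M : ℕ) (hd : 0 < d)
    (W : ℕ → Matrix (Fin d) (Fin d) ℂ) (hW : ∀ l ≤ L, W l ∈ Matrix.unitaryGroup (Fin d) ℂ)
    (H : ℕ → Fin d → ℤ) (j : ℕ → Fin M)
    (O : Matrix (Fin d) (Fin d) ℂ) (hO : O.IsHermitian) :
    ∃ (K : ℕ) (c : (Fin M → ℤ) → ℂ), ∀ x : Fin M → ℝ,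
      ((intSpecCircuit d L M W H j x)ᴴ * O * intSpecCircuit d L M W H j x) ⟨0, hd⟩ ⟨0, hd⟩ =
        ∑ k ∈ Finset.Icc (fun _ : Fin M => -(K : ℤ)) (fun _ : Fin M => (K : ℤ)),
          c k * Complex.exp (Complex.I * ∑ i, (k i : ℂ) * (x i : ℂ)) :=
  stmt_18_general d L M hd W H j O
end
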